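/- arXiv:1604.04145 — 3 statements merged into one kernel-verified Lean document; each statement's English description precedes it below -/
import Mathlib

section
/- Under the K-allele Wright-Fisher model with parent-independent mutation, for F(x,n) = ((θ)_n / ∏_i (θP_i)_{n_i}) ∏_i x_i^{n_i}, the one-step identity L F(·,n)(x) = ∑_{n̂} q(n,n̂)[F(x,n̂) − F(x,n)] holds, where q(n, n−e_i) = n_i(n+θ−1)/2 for each i with n_i ≥ 1 and q(n,n̂) = 0 for all other n̂ ≠ n. In particular the matrix Q = (q(n,n̂)) with diagonal q(n,n) = −n(n+θ−1)/2 is a valid rate matrix: off-diagonal entries are nonnegative and rows sum to zero. -/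
open Finset

noncomputable def pderiv1 {K : ℕ} (i : Fin K) (f : (Fin K → ℝ) → ℝ)
    (x : Fin K → ℝ) : ℝ :=
  deriv (fun t => f (Function.update x i t)) (x i)

/-- The `K`-allele Wright-Fisher generator with parent-independent mutation. -/
noncomputable def WFgenK {K : ℕ} (θ : ℝ) (P : Fin K → ℝ)
    (f : (Fin K → ℝ) → ℝ) (x : Fin K → ℝ) : ℝ :=
  (1 / 2) * ∑ i, ∑ j, x i * ((if i = j then (1 : ℝ) else 0) - x j) *
      pderiv1 i (fun y => pderiv1 j f y) x
    + (θ / 2) * ∑ i, (P i - x i) * pderiv1 i f x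

/-- Duality function `F(x,n) = ((θ)_n / ∏ᵢ (θPᵢ)_{nᵢ}) ∏ᵢ xᵢ^{nᵢ}`. -/
noncomputable def FPIM {K : ℕ} (θ : ℝ) (P : Fin K → ℝ) (x : Fin K → ℝ)
    (n : Fin K → ℕ) : ℝ :=
  ((ascPochhammer ℝ (∑ i, n i)).eval θ /
      ∏ i, (ascPochhammer ℝ (n i)).eval (θ * P i)) * ∏ i, x i ^ (n i)

/-- Removal of one individual of type `i` from the configuration `n`. -/
def decConf {K : ℕ} (n : Fin K → ℕ) (i : Fin K) : Fin K → ℕ :=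
  fun j => n j - if j = i then 1 else 0

/-- Transition rates of the dual death process: `q(n, n-eᵢ) = nᵢ(n+θ-1)/2`,
diagonal `q(n,n) = -n(n+θ-1)/2`, and zero otherwise. -/
noncomputable def qPIM {K : ℕ} (θ : ℝ) (n m : Fin K → ℕ) : ℝ :=
  if m = n then -((∑ j, n j : ℕ) * ((∑ j, n j : ℕ) + θ - 1) / 2)
  else ∑ i ∈ univ.filter (fun i => 1 ≤ n i ∧ m = decConf n i),
    ((n i : ℝ) * ((∑ j, n j : ℕ) + θ - 1) / 2)

section Aux
variable {K : ℕ}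

lemma decConf_apply_self (n : Fin K → ℕ) (i : Fin K) : decConf n i i = n i - 1 := by
  simp [decConf]

lemma decConf_apply_ne (n : Fin K → ℕ) {i j : Fin K} (h : j ≠ i) : decConf n i j = n j := by
  simp [decConf, h]

lemma prod_pow_decConf (m : Fin K → ℕ) (i : Fin K) (x : Fin K → ℝ) :
    ∏ k, x k ^ decConf m i k = x i ^ (m i - 1) * ∏ k ∈ univ.erase i, x k ^ m k := by
  rw [← Finset.mul_prod_erase univ _ (mem_univ i), decConf_apply_self]
  congr 1
  exact Finset.prod_congr rfl fun k hk => by rw [decConf_apply_ne _ (mem_erase.mp hk).1]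

lemma mul_prod_pow (m : Fin K → ℕ) (i : Fin K) (x : Fin K → ℝ) (h : 1 ≤ m i) :
    x i * ∏ k, x k ^ decConf m i k = ∏ k, x k ^ m k := by
  rw [prod_pow_decConf, ← Finset.mul_prod_erase univ (fun k => x k ^ m k) (mem_univ i),
    ← mul_assoc, ← pow_succ']
  congr 2
  omega

lemma pderiv1_mon (c : ℝ) (m : Fin K → ℕ) (i : Fin K) (x : Fin K → ℝ) :
    pderiv1 i (fun y => c * ∏ k, y k ^ m k) x
      = c * m i * ∏ k, x k ^ decConf m i k := by
  unfold pderiv1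
  have h : (fun t => c * ∏ k, Function.update x i t k ^ m k)
      = fun t => (c * ∏ k ∈ univ.erase i, x k ^ m k) * t ^ m i := by
    funext t
    rw [← Finset.mul_prod_erase univ (fun k => Function.update x i t k ^ m k) (mem_univ i),
      Function.update_self,
      Finset.prod_congr rfl (fun k hk => by rw [Function.update_of_ne (mem_erase.mp hk).1])]
    ring
  rw [h, deriv_const_mul_field, deriv_pow_field, prod_pow_decConf]
  ring

noncomputable def FC {K : ℕ} (θ : ℝ) (P : Fin K → ℝ) (n : Fin K → ℕ) : ℝ :=
  (ascPochhammer ℝ (∑ i, n i)).eval θ /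
      ∏ i, (ascPochhammer ℝ (n i)).eval (θ * P i)

lemma FPIM_eq (θ : ℝ) (P : Fin K → ℝ) (x : Fin K → ℝ) (n : Fin K → ℕ) :
    FPIM θ P x n = FC θ P n * ∏ k, x k ^ n k := rfl

lemma sum_decConf (n : Fin K → ℕ) (i : Fin K) (h : 1 ≤ n i) :
    (∑ j, decConf n i j) + 1 = ∑ j, n j := by
  rw [← Finset.add_sum_erase univ (decConf n i) (mem_univ i),
    ← Finset.add_sum_erase univ n (mem_univ i), decConf_apply_self,
    Finset.sum_congr rfl (fun k hk => decConf_apply_ne n (mem_erase.mp hk).1)]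
  omega

lemma FC_identity {θ : ℝ} (hθ : 0 < θ) {P : Fin K → ℝ} (hP : ∀ i, 0 < P i)
    (n : Fin K → ℕ) (i : Fin K) (h : 1 ≤ n i) :
    FC θ P n * (((n i : ℝ) - 1) + θ * P i) =
      (((∑ j, n j : ℕ) : ℝ) + θ - 1) * FC θ P (decConf n i) := by
  have hsum := sum_decConf n i h
  have hni : decConf n i i + 1 = n i := by rw [decConf_apply_self]; omega
  have hpos : ∀ (k : Fin K) (m : ℕ), (0:ℝ) < (ascPochhammer ℝ m).eval (θ * P k) :=
    fun k m => ascPochhammer_pos m _ (mul_pos hθ (hP k))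
  have e1 : (ascPochhammer ℝ (∑ j, n j)).eval θ
      = (ascPochhammer ℝ (∑ j, decConf n i j)).eval θ * (θ + (∑ j, decConf n i j : ℕ)) := by
    conv_lhs => rw [← hsum]
    rw [ascPochhammer_succ_eval]
  have e2 : ∏ k, (ascPochhammer ℝ (n k)).eval (θ * P k)
      = ((ascPochhammer ℝ (decConf n i i)).eval (θ * P i) * (θ * P i + (decConf n i i : ℕ)))
        * ∏ k ∈ univ.erase i, (ascPochhammer ℝ (n k)).eval (θ * P k) := by
    rw [← Finset.mul_prod_erase univ (fun k => (ascPochhammer ℝ (n k)).eval (θ * P k))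
      (mem_univ i)]
    congr 1
    conv_lhs => rw [← hni]
    rw [ascPochhammer_succ_eval]
  have e3 : ∏ k, (ascPochhammer ℝ (decConf n i k)).eval (θ * P k)
      = (ascPochhammer ℝ (decConf n i i)).eval (θ * P i)
        * ∏ k ∈ univ.erase i, (ascPochhammer ℝ (n k)).eval (θ * P k) := by
    rw [← Finset.mul_prod_erase univ
      (fun k => (ascPochhammer ℝ (decConf n i k)).eval (θ * P k)) (mem_univ i)]
    congr 1
    exact Finset.prod_congr rfl fun k hk => by rw [decConf_apply_ne n (mem_erase.mp hk).1]
  have h1 : (ascPochhammer ℝ (decConf n i i)).eval (θ * P i) ≠ 0 := (hpos i _).ne'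
  have h2 : (∏ k ∈ univ.erase i, (ascPochhammer ℝ (n k)).eval (θ * P k)) ≠ 0 :=
    (Finset.prod_pos fun k _ => hpos k (n k)).ne'
  have h3 : θ * P i + ((decConf n i i : ℕ) : ℝ) ≠ 0 := by have hp := mul_pos hθ (hP i); positivity
  have h4 : ((n i : ℝ) - 1) + θ * P i = θ * P i + ((decConf n i i : ℕ) : ℝ) := by
    have : ((n i : ℕ) : ℝ) = ((decConf n i i : ℕ) : ℝ) + 1 := by exact_mod_cast hni.symm
    rw [this]; ring
  have h5 : (((∑ j, n j : ℕ)) : ℝ) + θ - 1 = θ + ((∑ j, decConf n i j : ℕ) : ℝ) := by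
    have : (((∑ j, n j : ℕ)) : ℝ) = ((∑ j, decConf n i j : ℕ) : ℝ) + 1 := by
      exact_mod_cast hsum.symm
    rw [this]; ring
  rw [FC, FC, e1, e2, e3, h4, h5]
  field_simp

lemma gen_mon (θ : ℝ) (P : Fin K → ℝ) (c : ℝ) (n : Fin K → ℕ) (x : Fin K → ℝ) :
    WFgenK θ P (fun y => c * ∏ k, y k ^ n k) x =
      (∑ i, (c * (n i : ℝ) * (((n i : ℝ) - 1) + θ * P i) / 2) * ∏ k, x k ^ decConf n i k)
        - c * ((∑ j, (n j : ℝ)) * ((∑ j, (n j : ℝ)) - 1) + θ * (∑ j, (n j : ℝ))) / 2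
            * ∏ k, x k ^ n k := by
  have p2 : ∀ i j : Fin K,
      pderiv1 i (fun y => pderiv1 j (fun y => c * ∏ k, y k ^ n k) y) x
        = c * (n j : ℝ) * ((decConf n j i : ℕ) : ℝ) * ∏ k, x k ^ decConf (decConf n j) i k := by
    intro i j
    have h : (fun y => pderiv1 j (fun y => c * ∏ k, y k ^ n k) y)
        = fun y => (c * (n j : ℝ)) * ∏ k, y k ^ decConf n j k :=
      funext fun y => pderiv1_mon c n j y
    rw [h, pderiv1_mon]
  have hterm1 : ∀ i j : Fin K,
      x i * ((if i = j then (1:ℝ) else 0) - x j) *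
          pderiv1 i (fun y => pderiv1 j (fun y => c * ∏ k, y k ^ n k) y) x
        = (if i = j then (1:ℝ) else 0) *
            (c * (n i : ℝ) * ((n i : ℝ) - 1) * ∏ k, x k ^ decConf n i k)
          - ((n i : ℝ) - if i = j then 1 else 0) * (n j : ℝ) * (c * ∏ k, x k ^ n k) := by
    intro i j
    rw [p2]
    by_cases hij : i = j
    · subst hij
      simp only [eq_self_iff_true, if_true]
      rcases Nat.lt_or_ge (n i) 2 with h2 | h2
      · have : n i = 0 ∨ n i = 1 := by omega
        rcases this with h0 | h0 <;>
          simp [h0, decConf_apply_self]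
      · have h1 : 1 ≤ n i := by omega
        have hd : 1 ≤ decConf n i i := by rw [decConf_apply_self]; omega
        have e1 : x i * ∏ k, x k ^ decConf (decConf n i) i k = ∏ k, x k ^ decConf n i k :=
          mul_prod_pow _ i x hd
        have e2 : x i * ∏ k, x k ^ decConf n i k = ∏ k, x k ^ n k :=
          mul_prod_pow _ i x h1
        have e3 : x i * (x i * ∏ k, x k ^ decConf (decConf n i) i k) = ∏ k, x k ^ n k := by
          rw [e1, e2]
        have hcast : ((decConf n i i : ℕ) : ℝ) = (n i : ℝ) - 1 := by
          rw [decConf_apply_self]; push_cast [h1]; ring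
        rw [hcast]
        linear_combination (c * (n i : ℝ) * ((n i : ℝ) - 1)) * e1
          - (c * (n i : ℝ) * ((n i : ℝ) - 1)) * e3
    · simp only [if_neg hij]
      have hdi : decConf n j i = n i := decConf_apply_ne n hij
      rcases Nat.eq_zero_or_pos (n j) with h0 | hj
      · simp [h0]
      rcases Nat.eq_zero_or_pos (n i) with h0i | hi
      · simp [hdi, h0i]
      have e1 : x i * ∏ k, x k ^ decConf (decConf n j) i k = ∏ k, x k ^ decConf n j k :=
        mul_prod_pow _ i x (by rw [hdi]; exact hi)
      have e2 : x j * ∏ k, x k ^ decConf n j k = ∏ k, x k ^ n k :=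
        mul_prod_pow _ j x hj
      have e3 : x i * (x j * ∏ k, x k ^ decConf (decConf n j) i k) = ∏ k, x k ^ n k := by
        rw [mul_left_comm, e1, e2]
      rw [hdi]
      linear_combination (-(c * (n j : ℝ) * (n i : ℝ))) * e3
  have hterm2 : ∀ i : Fin K,
      (P i - x i) * pderiv1 i (fun y => c * ∏ k, y k ^ n k) x
        = c * (n i : ℝ) * P i * (∏ k, x k ^ decConf n i k)
          - (n i : ℝ) * (c * ∏ k, x k ^ n k) := by
    intro i
    rw [pderiv1_mon]
    rcases Nat.eq_zero_or_pos (n i) with h0 | hi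
    · simp [h0]
    have e2 : x i * ∏ k, x k ^ decConf n i k = ∏ k, x k ^ n k := mul_prod_pow _ i x hi
    linear_combination (-(c * (n i : ℝ))) * e2
  rw [WFgenK]
  simp only [hterm1, hterm2, Finset.sum_sub_distrib]
  have hs1 : ∀ i : Fin K, ∑ j, (if i = j then (1:ℝ) else 0) *
      (c * (n i : ℝ) * ((n i : ℝ) - 1) * ∏ k, x k ^ decConf n i k)
      = c * (n i : ℝ) * ((n i : ℝ) - 1) * ∏ k, x k ^ decConf n i k := by
    intro i
    rw [← Finset.sum_mul, Finset.sum_ite_eq univ i (fun _ => (1:ℝ)), if_pos (mem_univ i), one_mul]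
  have hs2 : ∀ i : Fin K, ∑ j, ((n i : ℝ) - if i = j then 1 else 0) * (n j : ℝ) *
      (c * ∏ k, x k ^ n k)
      = ((n i : ℝ) * (∑ j, (n j : ℝ)) - (n i : ℝ)) * (c * ∏ k, x k ^ n k) := by
    intro i
    rw [← Finset.sum_mul]
    congr 1
    have : ∀ j : Fin K, ((n i : ℝ) - if i = j then 1 else 0) * (n j : ℝ)
        = (n i : ℝ) * (n j : ℝ) - (if i = j then (n j : ℝ) else 0) := by
      intro j
      by_cases hij : i = j
      · simp [hij]; ring
      · simp [hij]
    simp only [this, Finset.sum_sub_distrib, ← Finset.mul_sum,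
      Finset.sum_ite_eq univ i (fun j => (n j : ℝ)), if_pos (mem_univ i)]
  simp only [hs1, hs2, Finset.sum_sub_distrib, ← Finset.sum_mul]
  have hcomb : (∑ i, (c * (n i : ℝ) * (((n i : ℝ) - 1) + θ * P i) / 2)
        * ∏ k, x k ^ decConf n i k)
      = (1/2) * ∑ i, c * (n i : ℝ) * ((n i : ℝ) - 1) * ∏ k, x k ^ decConf n i k
        + (θ/2) * ∑ i, c * (n i : ℝ) * P i * ∏ k, x k ^ decConf n i k := by
    rw [Finset.mul_sum, Finset.mul_sum, ← Finset.sum_add_distrib]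
    exact Finset.sum_congr rfl fun i _ => by ring
  rw [hcomb]
  ring

lemma WFgen_FPIM {θ : ℝ} (hθ : 0 < θ) {P : Fin K → ℝ} (hP : ∀ i, 0 < P i)
    (n : Fin K → ℕ) (x : Fin K → ℝ) :
    WFgenK θ P (fun y => FPIM θ P y n) x =
      ∑ i ∈ univ.filter (fun i => 1 ≤ n i),
        ((n i : ℝ) * (((∑ j, n j : ℕ) : ℝ) + θ - 1) / 2) *
          (FPIM θ P x (decConf n i) - FPIM θ P x n) := by
  have hfun : (fun y => FPIM θ P y n) = fun y => FC θ P n * ∏ k, y k ^ n k := rfl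
  rw [hfun, gen_mon]
  have hN : (∑ j, (n j : ℝ)) = ((∑ j, n j : ℕ) : ℝ) := by push_cast; rfl
  have hper : ∀ i ∈ univ.filter (fun i => 1 ≤ n i),
      ((n i : ℝ) * (((∑ j, n j : ℕ) : ℝ) + θ - 1) / 2) *
          (FPIM θ P x (decConf n i) - FPIM θ P x n)
        = (FC θ P n * (n i : ℝ) * (((n i : ℝ) - 1) + θ * P i) / 2)
            * (∏ k, x k ^ decConf n i k)
          - ((n i : ℝ) * (((∑ j, n j : ℕ) : ℝ) + θ - 1) / 2)
            * (FC θ P n * ∏ k, x k ^ n k) := by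
    intro i hi
    have hkey := FC_identity hθ hP n i (mem_filter.mp hi).2
    simp only [FPIM_eq]
    linear_combination (-((n i : ℝ) / 2 * ∏ k, x k ^ decConf n i k)) * hkey
  rw [Finset.sum_congr rfl hper, Finset.sum_sub_distrib]
  have h1 : ∑ i ∈ univ.filter (fun i => 1 ≤ n i),
        (FC θ P n * (n i : ℝ) * (((n i : ℝ) - 1) + θ * P i) / 2)
          * (∏ k, x k ^ decConf n i k)
      = ∑ i, (FC θ P n * (n i : ℝ) * (((n i : ℝ) - 1) + θ * P i) / 2)
          * (∏ k, x k ^ decConf n i k) := by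
    apply Finset.sum_subset (filter_subset _ _)
    intro i _ hi
    have : n i = 0 := by simp [mem_filter] at hi; omega
    simp [this]
  have h2 : ∑ i ∈ univ.filter (fun i => 1 ≤ n i), (n i : ℝ) = ((∑ j, n j : ℕ) : ℝ) := by
    rw [← Nat.cast_sum]
    have : ∑ i ∈ univ.filter (fun i => 1 ≤ n i), n i = ∑ i, n i := by
      apply Finset.sum_subset (filter_subset _ _)
      intro i _ hi
      simp [mem_filter] at hi; omega
    rw [this]
  have h3 : ∑ i ∈ univ.filter (fun i => 1 ≤ n i),
        ((n i : ℝ) * (((∑ j, n j : ℕ) : ℝ) + θ - 1) / 2)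
          * (FC θ P n * ∏ k, x k ^ n k)
      = ((∑ j, n j : ℕ) : ℝ) * ((((∑ j, n j : ℕ) : ℝ)) + θ - 1) / 2
          * (FC θ P n * ∏ k, x k ^ n k) := by
    rw [← Finset.sum_mul, ← Finset.sum_div, ← Finset.sum_mul, h2]
  rw [h1, h3, hN]
  ring

lemma decConf_ne (n : Fin K → ℕ) (i : Fin K) (h : 1 ≤ n i) : decConf n i ≠ n := by
  intro he
  have := congrFun he i
  rw [decConf_apply_self] at this
  omega

lemma decConf_inj (n : Fin K → ℕ) {i j : Fin K} (hi : 1 ≤ n i)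
    (h : decConf n i = decConf n j) : i = j := by
  by_contra hij
  have := congrFun h i
  rw [decConf_apply_self, decConf_apply_ne n hij] at this
  omega

lemma qPIM_decConf (θ : ℝ) (n : Fin K → ℕ) (i : Fin K) (h : 1 ≤ n i) :
    qPIM θ n (decConf n i) = (n i : ℝ) * (((∑ j, n j : ℕ) : ℝ) + θ - 1) / 2 := by
  rw [qPIM, if_neg (decConf_ne n i h)]
  have he : univ.filter (fun i' => 1 ≤ n i' ∧ decConf n i = decConf n i') = {i} := by
    ext i'
    simp only [mem_filter, mem_univ, true_and, mem_singleton]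
    constructor
    · rintro ⟨_, heq⟩
      exact (decConf_inj n h heq).symm
    · rintro rfl; exact ⟨h, rfl⟩
  rw [he, Finset.sum_singleton]

lemma n_notin_image (n : Fin K → ℕ) :
    n ∉ (univ.filter fun i => 1 ≤ n i).image (decConf n) := by
  simp only [mem_image, mem_filter, mem_univ, true_and]
  rintro ⟨i, hi, heq⟩
  exact decConf_ne n i hi heq

lemma qPIM_eq_zero {θ : ℝ} {n m : Fin K → ℕ}
    (hm : m ∉ insert n ((univ.filter fun i => 1 ≤ n i).image (decConf n))) :
    qPIM θ n m = 0 := by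
  simp only [mem_insert, mem_image, mem_filter, mem_univ, true_and] at hm
  push_neg at hm
  obtain ⟨h1, h2⟩ := hm
  rw [qPIM, if_neg h1]
  have : univ.filter (fun i => 1 ≤ n i ∧ m = decConf n i) = (∅ : Finset (Fin K)) := by
    rw [Finset.filter_eq_empty_iff]
    rintro i _ ⟨hi1, hi2⟩
    exact h2 i hi1 hi2.symm
  rw [this, Finset.sum_empty]

lemma sum_filter_cast (n : Fin K → ℕ) :
    ∑ i ∈ univ.filter (fun i => 1 ≤ n i), (n i : ℝ) = ((∑ j, n j : ℕ) : ℝ) := by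
  rw [← Nat.cast_sum]
  have : ∑ i ∈ univ.filter (fun i => 1 ≤ n i), n i = ∑ i, n i := by
    apply Finset.sum_subset (filter_subset _ _)
    intro i _ hi
    simp [mem_filter] at hi; omega
  rw [this]

end Aux

/-- The one-step duality identity `L F(·,n)(x) = ∑_{n̂} q(n,n̂)[F(x,n̂) − F(x,n)]`,
together with the fact that `Q` is a valid rate matrix: off-diagonal entries are
nonnegative and rows sum to zero. -/
theorem WFgenK_rate_matrix_duality (K : ℕ) (θ : ℝ) (hθ : 0 < θ)
    (P : Fin K → ℝ) (hP : ∀ i, 0 < P i) (hPsum : ∑ i, P i = 1)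
    (n : Fin K → ℕ) (hn : 1 ≤ ∑ i, n i) :
    (∀ x : Fin K → ℝ, ((∀ i, 0 ≤ x i) ∧ ∑ i, x i = 1) →
        WFgenK θ P (fun y => FPIM θ P y n) x =
          ∑ᶠ m : Fin K → ℕ, qPIM θ n m * (FPIM θ P x m - FPIM θ P x n))
    ∧ (∀ m : Fin K → ℕ, m ≠ n → 0 ≤ qPIM θ n m)
    ∧ (∑ᶠ m : Fin K → ℕ, qPIM θ n m) = 0 := by
  classical
  set S : Finset (Fin K → ℕ) :=
    insert n ((univ.filter fun i => 1 ≤ n i).image (decConf n)) with hS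
  have hNθ : (0:ℝ) ≤ ((∑ j, n j : ℕ) : ℝ) + θ - 1 := by
    have h1 : (1:ℝ) ≤ ((∑ j, n j : ℕ) : ℝ) := by exact_mod_cast hn
    linarith
  have hinj : ∀ i ∈ univ.filter (fun i => 1 ≤ n i), ∀ j ∈ univ.filter (fun i => 1 ≤ n i),
      decConf n i = decConf n j → i = j :=
    fun i hi j _ h => decConf_inj n (mem_filter.mp hi).2 h
  refine ⟨?_, ?_, ?_⟩
  · intro x _
    rw [WFgen_FPIM hθ hP n x]
    have hsupp : Function.support
        (fun m => qPIM θ n m * (FPIM θ P x m - FPIM θ P x n)) ⊆ ↑S := by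
      intro m hm
      rw [Finset.mem_coe]
      by_contra hc
      refine hm ?_
      show qPIM θ n m * (FPIM θ P x m - FPIM θ P x n) = 0
      rw [qPIM_eq_zero hc, zero_mul]
    rw [finsum_eq_finset_sum_of_support_subset _ hsupp, hS,
      Finset.sum_insert (n_notin_image n), Finset.sum_image hinj]
    simp only [sub_self, mul_zero, zero_add]
    exact Finset.sum_congr rfl fun i hi => by
      rw [qPIM_decConf θ n i (mem_filter.mp hi).2]
  · intro m hm
    rw [qPIM, if_neg hm]
    apply Finset.sum_nonneg
    intro i _
    have h0 : (0:ℝ) ≤ (n i : ℝ) := Nat.cast_nonneg _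
    exact div_nonneg (mul_nonneg h0 hNθ) (by norm_num)
  · have hsupp : Function.support (qPIM θ n) ⊆ ↑S := by
      intro m hm
      rw [Finset.mem_coe]
      by_contra hc
      exact hm (qPIM_eq_zero hc)
    rw [finsum_eq_finset_sum_of_support_subset _ hsupp, hS,
      Finset.sum_insert (n_notin_image n), Finset.sum_image hinj]
    rw [show qPIM θ n n = -((∑ j, n j : ℕ) * (((∑ j, n j : ℕ) : ℝ) + θ - 1) / 2) from
      by rw [qPIM, if_pos rfl]]
    rw [Finset.sum_congr rfl fun i hi => qPIM_decConf θ n i (mem_filter.mp hi).2]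
    rw [← Finset.sum_div, ← Finset.sum_mul, sum_filter_cast]
    ring
end

section
/- With Q̃(x,n) = C(n;n) ∏_{∅≠A⊆[L]} ∏_{i∈E_A} (x_i^A)^{n_i^A} the multinomial-weighted sampling function, the identity x_i^{A∪B} Q̃(x, n − e_i^A − e_i^B) = ((n_i^{A∪B} + 1 − δ_{A,A∪B} − δ_{B,A∪B})/(n−1)) Q̃(x, n − e_i^A − e_i^B + e_i^{A∪B}) holds, whenever n has total size n ≥ 2 and n_i^A ≥ 1, n_i^B ≥ δ_{AB} (with n_i^A, n_i^B counting haplotype i restricted to A and B). -/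
open Finset

lemma multinomial_update {α : Type*} [Fintype α] [DecidableEq α] (f : α → ℕ) (P : α) :
    (f P + 1) * Nat.multinomial univ (Function.update f P (f P + 1)) =
      ((∑ p, f p) + 1) * Nat.multinomial univ f := by
  have hmem : P ∈ (univ : Finset α) := mem_univ P
  have hprod : ∏ p, Nat.factorial (Function.update f P (f P + 1) p) =
      (f P + 1) * ∏ p, Nat.factorial (f p) := by
    rw [← Finset.mul_prod_erase univ _ hmem, ← Finset.mul_prod_erase univ (fun p => (f p).factorial) hmem]
    rw [Function.update_self, Nat.factorial_succ, mul_assoc]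
    congr 1
    congr 1
    exact Finset.prod_congr rfl fun q hq => by
      rw [Function.update_of_ne (Finset.ne_of_mem_erase hq)]
  have hsum : ∑ p, Function.update f P (f P + 1) p = (∑ p, f p) + 1 := by
    rw [← Finset.add_sum_erase univ _ hmem, ← Finset.add_sum_erase univ f hmem]
    rw [Function.update_self]
    have : ∑ q ∈ univ.erase P, Function.update f P (f P + 1) q = ∑ q ∈ univ.erase P, f q :=
      Finset.sum_congr rfl fun q hq => by rw [Function.update_of_ne (Finset.ne_of_mem_erase hq)]
    omega
  have s1 := Nat.multinomial_spec (univ : Finset α) (Function.update f P (f P + 1))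
  have s2 := Nat.multinomial_spec (univ : Finset α) f
  rw [hprod, hsum] at s1
  have hpos : 0 < ∏ p, Nat.factorial (f p) := Finset.prod_pos fun p _ => Nat.factorial_pos _
  have key : (∏ p, Nat.factorial (f p)) * ((f P + 1) * Nat.multinomial univ (Function.update f P (f P + 1)))
      = (∏ p, Nat.factorial (f p)) * (((∑ p, f p) + 1) * Nat.multinomial univ f) := by
    rw [← mul_assoc, mul_comm (∏ p, Nat.factorial (f p)) (f P + 1), s1,
      Nat.factorial_succ]
    rw [mul_comm ((∑ p, f p) + 1) (Nat.factorial (∑ p, f p)), ← s2]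
    ring
  exact Nat.eq_of_mul_eq_mul_left hpos key

section
variable {L : ℕ} {El : Fin L → Type} [∀ l, Fintype (El l)] [∀ l, DecidableEq (El l)]
  [∀ l, Inhabited (El l)]

/-- The canonical representative of the restriction of a haplotype `i` to the
loci in `A` (non-ancestral loci are set to a default allele). -/
def restr (A : Finset (Fin L)) (i : ∀ l, El l) : ∀ l, El l :=
  fun l => if l ∈ A then i l else default

/-- Marginal frequency `x_i^A = ∑_{j : j|_A = i|_A} x_j`. -/
def marg (x : (∀ l, El l) → ℝ) (A : Finset (Fin L)) (i : ∀ l, El l) : ℝ :=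
  ∑ j ∈ univ.filter (fun j : ∀ l, El l => ∀ l ∈ A, j l = i l), x j

/-- The unit configuration `e_i^A`. -/
def econf (A : Finset (Fin L)) (i : ∀ l, El l) :
    Finset (Fin L) × (∀ l, El l) → ℤ :=
  fun p => if p = (A, restr A i) then 1 else 0

/-- Total sample size of a configuration. -/
def totalConf (c : Finset (Fin L) × (∀ l, El l) → ℤ) : ℤ := ∑ p, c p

/-- A configuration is canonical if it is supported on pairs `(A,i)` with
`A` nonempty and `i` the canonical representative of its restriction to `A`. -/
def Canonical (c : Finset (Fin L) × (∀ l, El l) → ℤ) : Prop :=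
  ∀ p : Finset (Fin L) × (∀ l, El l), c p ≠ 0 → p.1.Nonempty ∧ restr p.1 p.2 = p.2

/-- The multinomial-weighted sampling function
`Q̃(x,n) = (n!/∏ n_i^A!) ∏_{A,i} (x_i^A)^{n_i^A}`, set to `0` when the
configuration has a negative entry. -/
noncomputable def Qt (x : (∀ l, El l) → ℝ)
    (c : Finset (Fin L) × (∀ l, El l) → ℤ) : ℝ :=
  if ∀ p, 0 ≤ c p then
    (Nat.multinomial univ (fun p => (c p).toNat) : ℝ) *
      ∏ p : Finset (Fin L) × (∀ l, El l), marg x p.1 p.2 ^ (c p).toNat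
  else 0

end


set_option maxHeartbeats 4000000 in
/-- Auxiliary identity (A.1) for the coalescence transition:
`x_i^{A∪B} Q̃(x, n − e_i^A − e_i^B)
  = ((n_i^{A∪B} + 1 − δ_{A,A∪B} − δ_{B,A∪B})/(n−1)) Q̃(x, n − e_i^A − e_i^B + e_i^{A∪B})`. -/
theorem coalescence_identity (L : ℕ) (El : Fin L → Type)
    [∀ l, Fintype (El l)] [∀ l, DecidableEq (El l)] [∀ l, Inhabited (El l)]
    (x : (∀ l, El l) → ℝ) (c : Finset (Fin L) × (∀ l, El l) → ℤ)
    (hc : Canonical c) (A B : Finset (Fin L)) (hA : A.Nonempty) (hB : B.Nonempty)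
    (i : ∀ l, El l) (hi : restr (A ∪ B) i = i)
    (hN : 2 ≤ totalConf c)
    (h1 : 1 ≤ c (A, restr A i))
    (h2 : (if A = B then 1 else 0 : ℤ) ≤ c (B, restr B i)) :
    marg x (A ∪ B) i * Qt x (c - econf A i - econf B i) =
      (((c (A ∪ B, i) + 1 - (if A = A ∪ B then 1 else 0)
          - (if B = A ∪ B then 1 else 0) : ℤ) : ℝ) / ((totalConf c : ℝ) - 1)) *
        Qt x (c - econf A i - econf B i + econf (A ∪ B) i) := by
  set P : Finset (Fin L) × (∀ l, El l) := (A ∪ B, i) with hP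
  clear_value P
  set d : Finset (Fin L) × (∀ l, El l) → ℤ := c - econf A i - econf B i with hd
  have hdef : ∀ p, d p = c p - econf A i p - econf B i p := fun p => rfl
  clear_value d
  -- econf values at P
  have e1 : econf A i P = (if A = A ∪ B then 1 else 0 : ℤ) := by
    rw [hP]
    unfold econf
    by_cases h : A = A ∪ B
    · have hr : restr A i = i := by rw [h]; exact hi
      simp [← h, hr]
    · have hne : ((A ∪ B, i) : Finset (Fin L) × (∀ l, El l)) ≠ (A, restr A i) := by
        intro hp
        exact h (congrArg Prod.fst hp).symm
      simp [hne, h]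
  have e2 : econf B i P = (if B = A ∪ B then 1 else 0 : ℤ) := by
    rw [hP]
    unfold econf
    by_cases h : B = A ∪ B
    · have hr : restr B i = i := by rw [h]; exact hi
      simp [← h, hr]
    · have hne : ((A ∪ B, i) : Finset (Fin L) × (∀ l, El l)) ≠ (B, restr B i) := by
        intro hp
        exact h (congrArg Prod.fst hp).symm
      simp [hne, h]
  -- numerator equals d P + 1
  have hnum : (c P + 1 - (if A = A ∪ B then 1 else 0)
      - (if B = A ∪ B then 1 else 0) : ℤ) = d P + 1 := by
    rw [hdef P, e1, e2]
    ring
  -- econf (A∪B) i as indicator of P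
  have eAB : ∀ p, econf (A ∪ B) i p = (if p = P then 1 else 0 : ℤ) := by
    intro p
    rw [hP]
    unfold econf
    rw [hi]
  by_cases hpos : ∀ p, 0 ≤ d p
  · -- main case
    have hdP : 0 ≤ d P := hpos P
    set f : Finset (Fin L) × (∀ l, El l) → ℕ := fun p => (d p).toNat with hf
    have hfdef : ∀ p, f p = (d p).toNat := fun _ => rfl
    clear_value f
    set S : ℕ := ∑ p, f p with hS
    clear_value S
    -- d + econf (A∪B) i entries
    have hd' : ∀ p, ((d + econf (A ∪ B) i) p).toNat = Function.update f P (f P + 1) p := by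
      intro p
      by_cases hp : p = P
      · subst hp
        simp only [Pi.add_apply, eAB, if_pos rfl, if_true, eq_self_iff_true, Function.update_self]
        rw [hfdef]
        have := hpos p
        omega
      · simp only [Pi.add_apply, eAB, if_neg hp, Function.update_of_ne hp, add_zero]
        exact (hfdef p).symm
    have hd'pos : ∀ p, 0 ≤ (d + econf (A ∪ B) i) p := by
      intro p
      have h0 : (0 : ℤ) ≤ econf (A ∪ B) i p := by rw [eAB p]; split <;> omega
      have := hpos p
      show 0 ≤ d p + econf (A ∪ B) i p
      omega
    have hQd : Qt x d = (Nat.multinomial univ f : ℝ) * ∏ p, marg x p.1 p.2 ^ f p := by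
      unfold Qt
      rw [if_pos hpos]
      simp only [← hfdef]
    have hQd' : Qt x (d + econf (A ∪ B) i) =
        (Nat.multinomial univ (Function.update f P (f P + 1)) : ℝ) *
          ∏ p, marg x p.1 p.2 ^ Function.update f P (f P + 1) p := by
      unfold Qt
      rw [if_pos hd'pos]
      simp only [hd']
    have hprod : ∏ p, marg x p.1 p.2 ^ Function.update f P (f P + 1) p =
        marg x (A ∪ B) i * ∏ p, marg x p.1 p.2 ^ f p := by
      rw [← Finset.mul_prod_erase univ _ (mem_univ P),
        ← Finset.mul_prod_erase univ (fun p => marg x p.1 p.2 ^ f p) (mem_univ P)]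
      rw [Function.update_self, pow_succ]
      have hrest : ∏ q ∈ univ.erase P, marg x q.1 q.2 ^ Function.update f P (f P + 1) q =
          ∏ q ∈ univ.erase P, marg x q.1 q.2 ^ f q :=
        Finset.prod_congr rfl fun q hq => by
          rw [Function.update_of_ne (Finset.ne_of_mem_erase hq)]
      rw [hrest]
      rw [hP]
      ring
    -- total size
    have hsumd : ∑ p, d p = (S : ℤ) := by
      rw [hS]
      push_cast
      exact Finset.sum_congr rfl fun p _ => by
        rw [hfdef p, Int.toNat_of_nonneg (hpos p)]
    have hesum : ∀ (C : Finset (Fin L)) (j : ∀ l, El l), ∑ p, econf C j p = 1 := by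
      intro C j
      simp [econf]
    have htot : totalConf c = (S : ℤ) + 2 := by
      unfold totalConf
      have hcp : ∀ p, c p = d p + econf A i p + econf B i p := by
        intro p
        rw [hdef p]
        ring
      rw [Finset.sum_congr rfl fun p _ => hcp p, Finset.sum_add_distrib,
        Finset.sum_add_distrib, hsumd, hesum, hesum]
      ring
    have hfP : (d P : ℤ) = (f P : ℤ) := by
      rw [hfdef P, Int.toNat_of_nonneg hdP]
    have hnumR : ((c P + 1 - (if A = A ∪ B then 1 else 0)
        - (if B = A ∪ B then 1 else 0) : ℤ) : ℝ) = (f P : ℝ) + 1 := by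
      rw [hnum]
      rw [hfP]
      push_cast
      ring
    have hden : (totalConf c : ℝ) - 1 = (S : ℝ) + 1 := by
      rw [htot]
      push_cast
      ring
    have hden0 : (S : ℝ) + 1 ≠ 0 := by positivity
    have hM : ((f P : ℝ) + 1) * (Nat.multinomial univ (Function.update f P (f P + 1)) : ℝ) =
        ((S : ℝ) + 1) * (Nat.multinomial univ f : ℝ) := by
      rw [hS]
      exact_mod_cast multinomial_update f P
    have key : ((f P : ℝ) + 1) / ((S : ℝ) + 1) *
        (Nat.multinomial univ (Function.update f P (f P + 1)) : ℝ) =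
        (Nat.multinomial univ f : ℝ) := by
      rw [div_mul_eq_mul_div, hM]
      exact mul_div_cancel_left₀ _ hden0
    rw [hQd, hQd', hprod, hnumR, hden, ← key]
    ring
  · -- degenerate case: some entry of d is negative
    push_neg at hpos
    obtain ⟨p, hp⟩ := hpos
    have hQ0 : Qt x d = 0 := by
      unfold Qt
      rw [if_neg]
      intro h
      exact absurd (h p) (not_le.mpr hp)
    rw [hQ0, mul_zero]
    by_cases hpP : p = P
    · subst hpP
      by_cases hm : d p = -1
      · have hz : (c p + 1 - (if A = A ∪ B then 1 else 0)
            - (if B = A ∪ B then 1 else 0) : ℤ) = 0 := by rw [hnum, hm]; ring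
        rw [hz]
        simp
      · -- d P ≤ -2, so the augmented configuration still has a negative entry
        have hQ0' : Qt x (d + econf (A ∪ B) i) = 0 := by
          unfold Qt
          rw [if_neg]
          intro h
          have := h p
          rw [show (d + econf (A ∪ B) i) p = d p + econf (A ∪ B) i p
            from rfl, eAB p, if_pos rfl] at this
          omega
        rw [hQ0', mul_zero]
    · have hQ0' : Qt x (d + econf (A ∪ B) i) = 0 := by
        unfold Qt
        rw [if_neg]
        intro h
        have := h p
        rw [show (d + econf (A ∪ B) i) p = d p + econf (A ∪ B) i p
          from rfl, eAB p, if_neg hpP] at this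
        omega
      rw [hQ0', mul_zero]
end

section
/- With Q̃ as above, the identity x_i^{A≤l} x_i^{A>l} Q̃(x, n − e_i^A) = ((n_i^{A≤l}+1)(n_i^{A>l}+1)/(n(n+1))) Q̃(x, n − e_i^A + e_i^{A≤l} + e_i^{A>l}) holds for any configuration n of total size n ≥ 1 with n_i^A ≥ 1 and any l with min A ≤ l < max A, where A≤l = A∩{1,...,l} and A>l = A∩{l+1,...,L}. -/
open Finset

theorem marg_restr' {L : ℕ} {El : Fin L → Type} [∀ l, Fintype (El l)] [∀ l, DecidableEq (El l)]
    [∀ l, Inhabited (El l)] (x : (∀ l, El l) → ℝ) (A : Finset (Fin L)) (i : ∀ l, El l) :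
    marg x A (restr A i) = marg x A i := by
  unfold marg
  congr 1
  apply Finset.filter_congr
  intro j _
  refine forall₂_congr fun l hl => ?_
  simp [restr, hl]

/-- helper: split a product over a fintype at two distinct points -/
theorem prod_split_two {α M : Type*} [Fintype α] [DecidableEq α] [CommMonoid M]
    (f : α → M) (a b : α) (hab : a ≠ b) :
    ∏ p, f p = f a * f b * ∏ p ∈ (univ.erase a).erase b, f p := by
  rw [← Finset.mul_prod_erase univ f (Finset.mem_univ a),
    ← Finset.mul_prod_erase (univ.erase a) f (Finset.mem_erase.2 ⟨Ne.symm hab, Finset.mem_univ b⟩),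
    mul_assoc]

/-- Auxiliary identity (A.3) for the recombination transition:
`x_i^{A≤l} x_i^{A>l} Q̃(x, n − e_i^A)
  = ((n_i^{A≤l}+1)(n_i^{A>l}+1)/(n(n+1))) Q̃(x, n − e_i^A + e_i^{A≤l} + e_i^{A>l})`. -/
theorem recombination_identity (L : ℕ) (El : Fin L → Type)
    [∀ l, Fintype (El l)] [∀ l, DecidableEq (El l)] [∀ l, Inhabited (El l)]
    (x : (∀ l, El l) → ℝ) (c : Finset (Fin L) × (∀ l, El l) → ℤ)
    (hc : Canonical c) (A : Finset (Fin L))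
    (i : ∀ l, El l) (hi : restr A i = i)
    (k : ℕ)
    (hle : (A.filter (fun m : Fin L => (m : ℕ) ≤ k)).Nonempty)
    (hgt : (A.filter (fun m : Fin L => k < (m : ℕ))).Nonempty)
    (hN : 1 ≤ totalConf c)
    (h1 : 1 ≤ c (A, i)) :
    marg x (A.filter (fun m : Fin L => (m : ℕ) ≤ k)) i *
        marg x (A.filter (fun m : Fin L => k < (m : ℕ))) i * Qt x (c - econf A i) =
      ((((c (A.filter (fun m : Fin L => (m : ℕ) ≤ k),
              restr (A.filter (fun m : Fin L => (m : ℕ) ≤ k)) i) + 1 : ℤ) : ℝ) *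
          ((c (A.filter (fun m : Fin L => k < (m : ℕ)),
              restr (A.filter (fun m : Fin L => k < (m : ℕ))) i) + 1 : ℤ) : ℝ)) /
        ((totalConf c : ℝ) * ((totalConf c : ℝ) + 1))) *
        Qt x (c - econf A i + econf (A.filter (fun m : Fin L => (m : ℕ) ≤ k)) i
          + econf (A.filter (fun m : Fin L => k < (m : ℕ))) i) := by
  classical
  set B := A.filter (fun m : Fin L => (m : ℕ) ≤ k) with hBdef
  set C := A.filter (fun m : Fin L => k < (m : ℕ)) with hCdef
  obtain ⟨b, hb⟩ := hle
  obtain ⟨g, hg⟩ := hgt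
  rw [hBdef, Finset.mem_filter] at hb
  rw [hCdef, Finset.mem_filter] at hg
  have hgB : g ∉ B := by rw [hBdef, Finset.mem_filter]; push_neg; intro _; omega
  have hbC : b ∉ C := by rw [hCdef, Finset.mem_filter]; push_neg; intro _; omega
  have hbB : b ∈ B := by rw [hBdef, Finset.mem_filter]; exact hb
  have hBA : B ≠ A := fun h => hgB (h ▸ hg.1)
  have hCA : C ≠ A := fun h => hbC (h ▸ hb.1)
  have hBC : B ≠ C := fun h => hbC (h ▸ hbB)
  set pA : Finset (Fin L) × (∀ l, El l) := (A, i) with hpAdef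
  set pB : Finset (Fin L) × (∀ l, El l) := (B, restr B i) with hpBdef
  set pC : Finset (Fin L) × (∀ l, El l) := (C, restr C i) with hpCdef
  have hAB : pA ≠ pB := fun h => hBA (congrArg Prod.fst h).symm
  have hAC : pA ≠ pC := fun h => hCA (congrArg Prod.fst h).symm
  have hBCp : pB ≠ pC := fun h => hBC (congrArg Prod.fst h)
  have heA : ∀ p, econf A i p = if p = pA then 1 else 0 := by
    intro p; simp only [econf, hi, hpAdef]
  have heB : ∀ p, econf B i p = if p = pB then 1 else 0 := fun p => rfl
  have heC : ∀ p, econf C i p = if p = pC then 1 else 0 := fun p => rfl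
  by_cases hpos : ∀ p, 0 ≤ c p
  · -- main case
    have hc' : ∀ p, 0 ≤ (c - econf A i) p := by
      intro p
      simp only [Pi.sub_apply, heA]
      split_ifs with h
      · subst h; omega
      · have := hpos p; omega
    have hc'' : ∀ p, 0 ≤ (c - econf A i + econf B i + econf C i) p := by
      intro p
      have := hc' p
      simp only [Pi.add_apply, heB, heC]
      split_ifs <;> omega
    rw [Qt, Qt, if_pos hc', if_pos hc'']
    set n' : Finset (Fin L) × (∀ l, El l) → ℕ := fun p => ((c - econf A i) p).toNat with hn'def
    set n'' : Finset (Fin L) × (∀ l, El l) → ℕ :=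
      fun p => ((c - econf A i + econf B i + econf C i) p).toNat with hn''def
    have hconv' : (∏ p : Finset (Fin L) × (∀ l, El l),
          marg x p.1 p.2 ^ ((c - econf A i) p).toNat)
        = ∏ p : Finset (Fin L) × (∀ l, El l), marg x p.1 p.2 ^ n' p :=
      Finset.prod_congr rfl (fun p _ => rfl)
    have hconv'' : (∏ p : Finset (Fin L) × (∀ l, El l),
          marg x p.1 p.2 ^ ((c - econf A i + econf B i + econf C i) p).toNat)
        = ∏ p : Finset (Fin L) × (∀ l, El l), marg x p.1 p.2 ^ n'' p :=
      Finset.prod_congr rfl (fun p _ => rfl)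
    rw [hconv', hconv'']
    have hcB : (0:ℤ) ≤ c pB := hpos pB
    have hcC : (0:ℤ) ≤ c pC := hpos pC
    have hBpA : pB ≠ pA := fun h => hAB h.symm
    have hCpA : pC ≠ pA := fun h => hAC h.symm
    have hCpB : pC ≠ pB := fun h => hBCp h.symm
    have hc'B : (c - econf A i) pB = c pB := by
      rw [Pi.sub_apply, heA, if_neg hBpA, sub_zero]
    have hc'C : (c - econf A i) pC = c pC := by
      rw [Pi.sub_apply, heA, if_neg hCpA, sub_zero]
    have hn'B : (n' pB : ℤ) = c pB := by
      show (((c - econf A i) pB).toNat : ℤ) = c pB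
      rw [hc'B, Int.toNat_of_nonneg hcB]
    have hn'C : (n' pC : ℤ) = c pC := by
      show (((c - econf A i) pC).toNat : ℤ) = c pC
      rw [hc'C, Int.toNat_of_nonneg hcC]
    have hn''B : n'' pB = n' pB + 1 := by
      show ((c - econf A i + econf B i + econf C i) pB).toNat
        = ((c - econf A i) pB).toNat + 1
      rw [Pi.add_apply, Pi.add_apply, hc'B, heB, heC, if_pos rfl, if_neg hBCp, add_zero]
      omega
    have hn''C : n'' pC = n' pC + 1 := by
      show ((c - econf A i + econf B i + econf C i) pC).toNat
        = ((c - econf A i) pC).toNat + 1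
      rw [Pi.add_apply, Pi.add_apply, hc'C, heB, heC, if_pos rfl, if_neg hCpB, add_zero]
      omega
    have hn''o : ∀ p, p ≠ pB → p ≠ pC → n'' p = n' p := by
      intro p h2 h3
      show ((c - econf A i + econf B i + econf C i) p).toNat = ((c - econf A i) p).toNat
      rw [Pi.add_apply, Pi.add_apply, heB, heC, if_neg h2, if_neg h3, add_zero, add_zero]
    set S : ℕ := ∑ p, n' p with hSdef
    have hsumA : ∑ p, econf A i p = 1 := by simp [heA]
    have hsumB : ∑ p, econf B i p = 1 := by simp [heB]
    have hsumC : ∑ p, econf C i p = 1 := by simp [heC]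
    have hS : (S : ℤ) = totalConf c - 1 := by
      calc (S : ℤ) = ∑ p, ((n' p : ℤ)) := by rw [hSdef]; exact Nat.cast_sum _ _
        _ = ∑ p, (c - econf A i) p :=
            Finset.sum_congr rfl fun p _ => Int.toNat_of_nonneg (hc' p)
        _ = (∑ p, c p) - ∑ p, econf A i p := by
            simp only [Pi.sub_apply, Finset.sum_sub_distrib]
        _ = totalConf c - 1 := by rw [totalConf, hsumA]
    have hS'' : ((∑ p, n'' p : ℕ) : ℤ) = totalConf c + 1 := by
      calc ((∑ p, n'' p : ℕ) : ℤ) = ∑ p, ((n'' p : ℤ)) := Nat.cast_sum _ _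
        _ = ∑ p, (c - econf A i + econf B i + econf C i) p :=
            Finset.sum_congr rfl fun p _ => Int.toNat_of_nonneg (hc'' p)
        _ = (((∑ p, c p) - ∑ p, econf A i p) + ∑ p, econf B i p) + ∑ p, econf C i p := by
            simp only [Pi.add_apply, Pi.sub_apply, Finset.sum_add_distrib,
              Finset.sum_sub_distrib]
        _ = totalConf c + 1 := by rw [totalConf, hsumA, hsumB, hsumC]; ring
    have hSsum'' : ∑ p, n'' p = S + 2 := by omega
    -- product of factorials
    have hrest : ∀ p ∈ (univ.erase pB).erase pC, n'' p = n' p := by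
      intro p hp
      rw [Finset.mem_erase, Finset.mem_erase] at hp
      exact hn''o p hp.2.1 hp.1
    have hprodfact : ∏ p, (n'' p).factorial
        = ((n' pB + 1) * (n' pC + 1)) * ∏ p, (n' p).factorial := by
      rw [prod_split_two (fun p => (n'' p).factorial) pB pC hBCp,
        prod_split_two (fun p => (n' p).factorial) pB pC hBCp,
        Finset.prod_congr rfl (fun p hp => congrArg Nat.factorial (hrest p hp)),
        hn''B, hn''C, Nat.factorial_succ, Nat.factorial_succ]
      ring
    -- product of marginals
    have hmB : marg x pB.1 pB.2 = marg x B i := marg_restr' x B i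
    have hmC : marg x pC.1 pC.2 = marg x C i := marg_restr' x C i
    have hprodmarg : ∏ p, marg x p.1 p.2 ^ n'' p
        = (marg x B i * marg x C i) * ∏ p, marg x p.1 p.2 ^ n' p := by
      rw [prod_split_two (fun p => marg x p.1 p.2 ^ n'' p) pB pC hBCp,
        prod_split_two (fun p => marg x p.1 p.2 ^ n' p) pB pC hBCp,
        Finset.prod_congr rfl
          (fun p hp => congrArg (fun m => marg x p.1 p.2 ^ m) (hrest p hp)),
        hn''B, hn''C, pow_succ, pow_succ, hmB, hmC]
      ring
    -- multinomial key identity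
    have spec' := Nat.multinomial_spec Finset.univ n'
    have spec'' := Nat.multinomial_spec Finset.univ n''
    have key : Nat.multinomial Finset.univ n'' * ((n' pB + 1) * (n' pC + 1))
        = (S + 2) * (S + 1) * Nat.multinomial Finset.univ n' := by
      have hP : 0 < ∏ p, (n' p).factorial :=
        Finset.prod_pos fun p _ => Nat.factorial_pos _
      apply Nat.eq_of_mul_eq_mul_right hP
      calc Nat.multinomial Finset.univ n'' * ((n' pB + 1) * (n' pC + 1)) * ∏ p, (n' p).factorial
          = (∏ p, (n'' p).factorial) * Nat.multinomial Finset.univ n'' := by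
            rw [hprodfact]; ring
        _ = (∑ p, n'' p).factorial := spec''
        _ = (S + 2) * ((S + 1) * S.factorial) := by
            rw [hSsum'']
            rw [show S + 2 = (S+1) + 1 from rfl, Nat.factorial_succ, Nat.factorial_succ]
        _ = (S + 2) * ((S + 1) * ((∏ p, (n' p).factorial) * Nat.multinomial Finset.univ n')) := by
            rw [spec', hSdef]
        _ = (S + 2) * (S + 1) * Nat.multinomial Finset.univ n' * ∏ p, (n' p).factorial := by
            ring
    -- finish over ℝ
    have hNS : (totalConf c : ℝ) = ((S : ℕ) : ℝ) + 1 := by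
      have : totalConf c = (S : ℤ) + 1 := by omega
      rw [this]; push_cast; ring
    have hcBr : ((c pB + 1 : ℤ) : ℝ) = ((n' pB : ℕ) : ℝ) + 1 := by
      rw [← hn'B]; push_cast; ring
    have hcCr : ((c pC + 1 : ℤ) : ℝ) = ((n' pC : ℕ) : ℝ) + 1 := by
      rw [← hn'C]; push_cast; ring
    rw [hprodmarg, hcBr, hcCr, hNS]
    have keyR : (Nat.multinomial Finset.univ n'' : ℝ) * (((n' pB : ℝ) + 1) * ((n' pC : ℝ) + 1))
        = ((S : ℝ) + 2) * ((S : ℝ) + 1) * (Nat.multinomial Finset.univ n' : ℝ) := by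
      exact_mod_cast key
    have hpos' : (0:ℝ) < ((S : ℝ) + 1) * ((S : ℝ) + 1 + 1) := by positivity
    rw [div_mul_eq_mul_div, eq_div_iff hpos'.ne']
    linear_combination
      (-(marg x B i * marg x C i * ∏ p, marg x p.1 p.2 ^ n' p)) * keyR
  · -- some entry is negative
    push_neg at hpos
    obtain ⟨p₀, hp₀⟩ := hpos
    have hp₀A : p₀ ≠ pA := by
      intro h; rw [h] at hp₀; omega
    have hQ' : Qt x (c - econf A i) = 0 := by
      rw [Qt, if_neg]
      push_neg
      exact ⟨p₀, by simp only [Pi.sub_apply, heA, if_neg hp₀A]; omega⟩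
    rw [hQ', mul_zero]
    by_cases hp₀B : p₀ = pB
    · by_cases hm1 : c pB = -1
      · rw [hm1]; norm_num
      · have hQ'' : Qt x (c - econf A i + econf B i + econf C i) = 0 := by
          rw [Qt, if_neg]
          push_neg
          refine ⟨p₀, ?_⟩
          simp only [Pi.add_apply, Pi.sub_apply, heA, heB, heC, if_neg hp₀A, hp₀B,
            if_pos rfl, if_neg hBCp]
          rw [hp₀B] at hp₀
          omega
        rw [hQ'', mul_zero]
    · by_cases hp₀C : p₀ = pC
      · by_cases hm1 : c pC = -1
        · rw [hm1]; norm_num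
        · have hQ'' : Qt x (c - econf A i + econf B i + econf C i) = 0 := by
            rw [Qt, if_neg]
            push_neg
            refine ⟨p₀, ?_⟩
            have h2 : pC ≠ pB := fun h => hBCp h.symm
            simp only [Pi.add_apply, Pi.sub_apply, heA, heB, heC, if_neg hp₀A, hp₀C,
              if_neg h2, if_pos rfl]
            rw [hp₀C] at hp₀
            omega
          rw [hQ'', mul_zero]
      · have hQ'' : Qt x (c - econf A i + econf B i + econf C i) = 0 := by
          rw [Qt, if_neg]
          push_neg
          refine ⟨p₀, ?_⟩
          simp only [Pi.add_apply, Pi.sub_apply, heA, heB, heC, if_neg hp₀A, if_neg hp₀B,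
            if_neg hp₀C]
          omega
        rw [hQ'', mul_zero]
end
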